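/- arXiv:2601.18565 — 5 statements merged into one kernel-verified Lean document; each statement's English description precedes it below -/
import Mathlib

section
/- Let 0 < ε < d/2 and let (V₁, V₂) be an ε-regular pair in a bipartite graph with density at least d, where |V₁| is sufficiently large. Then there exists t = t(d, ε) (the least integer with (1 - (d - 2ε))^t < ε) and vertices u₁, …, u_t ∈ V₁ such that |⋃_{i=1}^t N(u_i) ∩ V₂| ≥ (1 - ε)|V₂|. -/
open Finset
open scoped Classical

/-- Edge density between two finsets of vertices. -/
noncomputable def dens {V : Type*} (G : SimpleGraph V) (X Y : Finset V) : ℝ :=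
  (Rel.edgeDensity G.Adj X Y : ℝ)

/-- `(A, B)` is `ε`-regular: all pairs of subsets of proportion at least `ε` have density
within `ε` of the density of `(A, B)`. -/
def EpsRegular {V : Type*} (G : SimpleGraph V) (ε : ℝ) (A B : Finset V) : Prop :=
  ∀ X ⊆ A, ∀ Y ⊆ B, ε * A.card ≤ X.card → ε * B.card ≤ Y.card →
    |dens G X Y - dens G A B| ≤ ε

lemma card_interedges_eq_sum' {α β : Type*} (r : α → β → Prop) [∀ a, DecidablePred (r a)]
    [DecidableEq α] [DecidableEq β] (s : Finset α) (t : Finset β) :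
    (Rel.interedges r s t).card = ∑ a ∈ s, (t.filter (r a)).card := by
  rw [Rel.interedges_eq_biUnion, card_biUnion]
  · simp
  · intro x hx y hy hxy
    simp only [disjoint_left, mem_map, Function.Embedding.coeFn_mk]
    rintro a ⟨b, hb, rfl⟩ ⟨b', hb', hb''⟩
    have : y = x := by simpa using congrArg Prod.fst hb''
    exact hxy this.symm

/-- Dominating Lemma: for `0 < ε < d/2` there exist `t = t(d, ε)` (the least
integer with `(1 - (d - 2ε))^t < ε`) and `N` such that in any graph with an `ε`-regular pair
`(A, B)` of density at least `d` and `|A| ≥ N`, there are vertices `u₁, …, u_t ∈ A` whose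
neighbourhoods cover all but at most `ε|B|` of `B`. -/
theorem stmt5 (d ε : ℝ) (hε : 0 < ε) (hεd : ε < d / 2) :
    ∃ t N : ℕ,
      ((1 - (d - 2 * ε)) ^ t < ε ∧ ∀ t' < t, ε ≤ (1 - (d - 2 * ε)) ^ t') ∧
      ∀ (V : Type) [Fintype V] (G : SimpleGraph V) (A B : Finset V),
        EpsRegular G ε A B → d ≤ dens G A B → N ≤ A.card →
        ∃ u : Fin t → V, (∀ i, u i ∈ A) ∧
          (1 - ε) * B.card ≤ ((B.filter fun v => ∃ i, G.Adj (u i) v).card : ℝ) := by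
  set c : ℝ := 1 - (d - 2 * ε) with hc
  have hd2 : 0 < d - 2 * ε := by linarith
  have hc1 : c < 1 := by rw [hc]; linarith
  have hex : ∃ n, c ^ n < ε := by
    rcases le_or_gt c 0 with h | h
    · exact ⟨1, by simpa using lt_of_le_of_lt h hε⟩
    · exact exists_pow_lt_of_lt_one hε hc1
  refine ⟨Nat.find hex, 1, ⟨Nat.find_spec hex, fun t' ht' => le_of_not_gt (Nat.find_min hex ht')⟩, ?_⟩
  set t := Nat.find hex with ht
  intro V _ G A B hreg hdens hA
  have hAne : A.Nonempty := card_pos.mp (by omega)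
  obtain ⟨a0, ha0⟩ := hAne
  rcases le_or_gt 1 ε with hε1 | hε1
  · refine ⟨fun _ => a0, fun _ => ha0, ?_⟩
    have h1 : (1 - ε) * B.card ≤ 0 :=
      mul_nonpos_of_nonpos_of_nonneg (by linarith) (Nat.cast_nonneg _)
    exact h1.trans (Nat.cast_nonneg _)
  -- main case : ε < 1
  have hdle : _root_.dens G A B ≤ 1 := by
    unfold _root_.dens; exact_mod_cast Rel.edgeDensity_le_one _ _ _
  have hd1 : d ≤ 1 := hdens.trans hdle
  have hc0 : 0 < c := by rw [hc]; linarith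
  have hApos : (0 : ℝ) < A.card := by exact_mod_cast card_pos.mpr ⟨a0, ha0⟩
  have hBpos : (0 : ℝ) < B.card := by
    rcases Finset.eq_empty_or_nonempty B with hB | h
    · exfalso
      have h0 : _root_.dens G A B = 0 := by
        unfold _root_.dens; rw [hB, Rel.edgeDensity_empty_right]; simp
      rw [h0] at hdens; linarith
    · exact_mod_cast card_pos.mpr h
  -- key pick lemma
  have pick : ∀ Y : Finset V, ∃ a, a ∈ A ∧ (Y ⊆ B → ε * B.card ≤ (Y.card : ℝ) →
      ((Y.filter fun v => ¬ G.Adj a v).card : ℝ) ≤ c * Y.card) := by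
    intro Y
    by_cases hY : Y ⊆ B ∧ ε * B.card ≤ (Y.card : ℝ)
    · obtain ⟨hYB, hYc⟩ := hY
      have hYpos : (0 : ℝ) < Y.card := lt_of_lt_of_le (by positivity) hYc
      by_contra hcon
      push_neg at hcon
      have hdeg : ∀ a ∈ A, ((Y.filter (G.Adj a)).card : ℝ) < (d - 2 * ε) * Y.card := by
        intro a ha
        have hbig := (hcon a ha).2.2
        have hsplit : (Y.filter (G.Adj a)).card + (Y.filter fun v => ¬ G.Adj a v).card
            = Y.card := card_filter_add_card_filter_not _
        have hsplit' : ((Y.filter (G.Adj a)).card : ℝ)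
            + ((Y.filter fun v => ¬ G.Adj a v).card : ℝ) = Y.card := by exact_mod_cast hsplit
        rw [hc] at hbig
        linarith
      have hsum : ((Rel.interedges G.Adj A Y).card : ℝ) < (d - 2 * ε) * (A.card * Y.card) := by
        rw [card_interedges_eq_sum']
        push_cast
        calc (∑ a ∈ A, ((Y.filter (G.Adj a)).card : ℝ))
            < ∑ _a ∈ A, (d - 2 * ε) * Y.card :=
              sum_lt_sum_of_nonempty ⟨a0, ha0⟩ hdeg
          _ = (d - 2 * ε) * (A.card * Y.card) := by
              rw [sum_const, nsmul_eq_mul]; ring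
      have hdAY : _root_.dens G A Y < d - 2 * ε := by
        have : _root_.dens G A Y = ((Rel.interedges G.Adj A Y).card : ℝ) / (A.card * Y.card) := by
          unfold _root_.dens Rel.edgeDensity; push_cast; ring
        rw [this, div_lt_iff₀ (by positivity)]
        linarith
      have hregAY := hreg A (Finset.Subset.refl A) Y hYB
        (by nlinarith) hYc
      rw [abs_le] at hregAY
      have := hregAY.1
      linarith
    · exact ⟨a0, ha0, fun h1 h2 => absurd ⟨h1, h2⟩ hY⟩
  choose g hgA hg using pick
  set U : ℕ → Finset V := fun n => Nat.rec B (fun _ Ui => Ui.filter fun v => ¬ G.Adj (g Ui) v) n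
    with hU
  have hU0 : U 0 = B := rfl
  have hUs : ∀ n, U (n + 1) = (U n).filter fun v => ¬ G.Adj (g (U n)) v := fun n => rfl
  have hUB : ∀ n, U n ⊆ B := by
    intro n
    induction n with
    | zero => rw [hU0]
    | succ n ih => rw [hUs]; exact (filter_subset _ _).trans ih
  have hkey : ∀ n, ((U n).card : ℝ) ≤ c ^ n * B.card ∨ ((U n).card : ℝ) ≤ ε * B.card := by
    intro n
    induction n with
    | zero => left; rw [hU0]; simp
    | succ n ih =>
      rcases le_or_gt (ε * B.card) ((U n).card : ℝ) with hge | hlt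
      · have hstep := hg (U n) (hUB n) hge
        rw [hUs n]
        rcases ih with h | h
        · left
          calc ((((U n).filter fun v => ¬ G.Adj (g (U n)) v).card : ℝ))
              ≤ c * (U n).card := hstep
            _ ≤ c * (c ^ n * B.card) := by nlinarith
            _ = c ^ (n + 1) * B.card := by ring
        · right
          calc ((((U n).filter fun v => ¬ G.Adj (g (U n)) v).card : ℝ))
              ≤ c * (U n).card := hstep
            _ ≤ c * (ε * B.card) := by nlinarith
            _ ≤ ε * B.card := by nlinarith
      · right
        have hsub : U (n + 1) ⊆ U n := by rw [hUs]; exact filter_subset _ _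
        have := card_le_card hsub
        have : ((U (n + 1)).card : ℝ) ≤ (U n).card := by exact_mod_cast this
        linarith
  have hfinal : ((U t).card : ℝ) ≤ ε * B.card := by
    rcases hkey t with h | h
    · calc ((U t).card : ℝ) ≤ c ^ t * B.card := h
        _ ≤ ε * B.card := mul_le_mul_of_nonneg_right (Nat.find_spec hex).le hBpos.le
    · exact h
  have hmem : ∀ n, ∀ v ∈ B, (∀ i, i < n → ¬ G.Adj (g (U i)) v) → v ∈ U n := by
    intro n
    induction n with
    | zero => intro v hv _; rwa [hU0]
    | succ n ih =>
      intro v hv h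
      rw [hUs, mem_filter]
      exact ⟨ih v hv fun i hi => h i (Nat.lt_succ_of_lt hi), h n (Nat.lt_succ_self n)⟩
  refine ⟨fun i => g (U i), fun i => hgA _, ?_⟩
  have hsub : B \ U t ⊆ B.filter fun v => ∃ i : Fin t, G.Adj (g (U (i : ℕ))) v := by
    intro v hv
    rw [mem_sdiff] at hv
    rw [mem_filter]
    refine ⟨hv.1, ?_⟩
    by_contra hno
    push_neg at hno
    exact hv.2 (hmem t v hv.1 fun i hi => hno ⟨i, hi⟩)
  have hcard : ((B \ U t).card : ℝ) = B.card - (U t).card := by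
    rw [card_sdiff_of_subset (hUB t)]
    exact_mod_cast Nat.cast_sub (card_le_card (hUB t))
  have hle := card_le_card hsub
  have hle' : ((B \ U t).card : ℝ)
      ≤ ((B.filter fun v => ∃ i : Fin t, G.Adj (g (U (i : ℕ))) v).card : ℝ) := by
    exact_mod_cast hle
  rw [hcard] at hle'
  have : (1 - ε) * B.card ≤ (B.card : ℝ) - (U t).card := by linarith
  linarith
end

section
/- Let G be a graph on vertex set V₁ ∪ V₂ ∪ V₃ with |V₁| = |V₂| = |V₃| = n/3 where V₁, V₂, V₃ are pairwise completely joined and each G[V_i] is triangle-free. Color all edges between V₁ and V₂ ∪ V₃ red and all other edges blue. Then no vertex of V₁ lies in any monochromatic triangle, and hence every family of vertex-disjoint monochromatic triangles has size at most (n - |V₁|)/3 = 2n/9. -/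
open Finset

/-- An edge `{u, v}` is red when exactly one endpoint lies in `V₁`. -/
def RedPair {V : Type*} (V₁ : Finset V) (u v : V) : Prop :=
  (u ∈ V₁ ∧ v ∉ V₁) ∨ (u ∉ V₁ ∧ v ∈ V₁)

/-- `t` is a monochromatic triangle of `G` under the colouring where edges between `V₁` and
its complement are red and all other edges are blue. -/
def MonoTriangle {V : Type*} [DecidableEq V] (G : SimpleGraph V) (V₁ : Finset V)
    (t : Finset V) : Prop :=
  ∃ a b c : V, t = {a, b, c} ∧ a ≠ b ∧ a ≠ c ∧ b ≠ c ∧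
    G.Adj a b ∧ G.Adj a c ∧ G.Adj b c ∧
    ((RedPair V₁ a b ∧ RedPair V₁ a c ∧ RedPair V₁ b c) ∨
     (¬RedPair V₁ a b ∧ ¬RedPair V₁ a c ∧ ¬RedPair V₁ b c))

/-- in the complete tripartite construction with three parts of size `n/3`,
each part inducing a triangle-free graph, with edges between `V₁` and `V₂ ∪ V₃` red and
all other edges blue, no vertex of `V₁` lies in a monochromatic triangle, and every family
of vertex-disjoint monochromatic triangles has size at most `(n - |V₁|)/3 = 2n/9`. -/
theorem stmt9 {V : Type*} [Fintype V] [DecidableEq V] (n : ℕ)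
    (hn : Fintype.card V = n)
    (G : SimpleGraph V) (V₁ V₂ V₃ : Finset V)
    (hd12 : Disjoint V₁ V₂) (hd13 : Disjoint V₁ V₃) (hd23 : Disjoint V₂ V₃)
    (hcover : ∀ v : V, v ∈ V₁ ∨ v ∈ V₂ ∨ v ∈ V₃)
    (hc1 : 3 * V₁.card = n) (hc2 : V₂.card = V₁.card) (hc3 : V₃.card = V₁.card)
    (hjoin : ∀ u v : V, ((u ∈ V₁ ∧ v ∈ V₂) ∨ (u ∈ V₁ ∧ v ∈ V₃) ∨ (u ∈ V₂ ∧ v ∈ V₃)) →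
      G.Adj u v)
    (htf : ∀ W ∈ ({V₁, V₂, V₃} : Set (Finset V)), ∀ a ∈ W, ∀ b ∈ W, ∀ c ∈ W,
      ¬(G.Adj a b ∧ G.Adj a c ∧ G.Adj b c)) :
    (∀ v ∈ V₁, ∀ t : Finset V, MonoTriangle G V₁ t → v ∉ t) ∧
    (∀ Γ : Finset (Finset V), (∀ t ∈ Γ, MonoTriangle G V₁ t) →
      (∀ s ∈ Γ, ∀ t ∈ Γ, s ≠ t → Disjoint s t) →
      (Γ.card : ℝ) ≤ ((n : ℝ) - V₁.card) / 3 ∧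
      ((n : ℝ) - V₁.card) / 3 = 2 * n / 9) := by

  have hnot : ∀ t : Finset V, MonoTriangle G V₁ t → ∀ v ∈ t, v ∉ V₁ := by
    rintro t ⟨a, b, c, rfl, hab, hac, hbc, Gab, Gac, Gbc, hcol⟩ v hv hv1
    simp only [Finset.mem_insert, Finset.mem_singleton] at hv
    unfold RedPair at hcol
    rcases hcol with ⟨r1, r2, r3⟩ | ⟨r1, r2, r3⟩
    · rcases hv with rfl | rfl | rfl <;> tauto
    · have hall : a ∈ V₁ ∧ b ∈ V₁ ∧ c ∈ V₁ := by
        rcases hv with rfl | rfl | rfl <;> tauto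
      exact htf V₁ (by simp) a hall.1 b hall.2.1 c hall.2.2 ⟨Gab, Gac, Gbc⟩
  refine ⟨fun v hv t ht hvt => hnot t ht v hvt hv, fun Γ hΓ hdisj => ?_⟩
  have hV1n : V₁.card ≤ n := by omega
  have heq : ((n : ℝ) - V₁.card) / 3 = 2 * n / 9 := by
    have : (3 : ℝ) * V₁.card = n := by exact_mod_cast hc1
    linarith
  refine ⟨?_, heq⟩
  have hcard3 : ∀ t ∈ Γ, t.card = 3 := by
    intro t ht
    obtain ⟨a, b, c, rfl, hab, hac, hbc, _⟩ := hΓ t ht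
    rw [Finset.card_insert_of_notMem (by simp [hab, hac]),
      Finset.card_insert_of_notMem (by simp [hbc]), Finset.card_singleton]
  have hbu : (Γ.biUnion id).card = 3 * Γ.card := by
    have h := Finset.card_biUnion (s := Γ) (t := id) hdisj
    rw [h]
    simp only [id_eq]
    rw [Finset.sum_congr rfl hcard3, Finset.sum_const, smul_eq_mul, mul_comm]
  have hsub : Γ.biUnion id ⊆ Finset.univ \ V₁ := by
    intro v hv
    simp only [Finset.mem_biUnion, id] at hv
    obtain ⟨t, ht, hvt⟩ := hv
    simp only [Finset.mem_sdiff, Finset.mem_univ, true_and]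
    exact hnot t (hΓ t ht) v hvt
  have hle : 3 * Γ.card ≤ n - V₁.card := by
    have := Finset.card_le_card hsub
    rwa [hbu, Finset.card_sdiff_of_subset (Finset.subset_univ _), Finset.card_univ, hn] at this
  have : (3 * Γ.card : ℝ) ≤ (n : ℝ) - V₁.card := by
    have := (Nat.cast_le (α := ℝ)).mpr hle
    push_cast [Nat.cast_sub hV1n] at this ⊢
    linarith
  linarith
end

section
/- Let n be a positive integer, let δ satisfy n/2 < δ ≤ (3/5)n, and let G be a graph with vertex partition V₁ ∪ V₂ ∪ V₃ where |V₁| = |V₂| = n - δ and |V₃| = 2δ - n, all cross pairs between distinct parts are edges, and each G[V_i] is triangle-free. Color all edges incident to V₁ (i.e., between V₁ and V₂ ∪ V₃) red and all remaining edges blue. Then every family of vertex-disjoint monochromatic triangles in this colored graph has size at most |V₃| = 2δ - n. -/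
open Finset

/-- for `n/2 < δ ≤ (3/5)n`, the construction with parts `V₁, V₂, V₃` of sizes
`n - δ, n - δ, 2δ - n`, complete bipartite graphs between distinct parts, triangle-free
inside each part, edges between `V₁` and `V₂ ∪ V₃` red and all others blue, admits no family
of vertex-disjoint monochromatic triangles of size larger than `|V₃| = 2δ - n`. -/
theorem stmt10 {V : Type*} [Fintype V] [DecidableEq V] (n δ : ℕ) (hn : 0 < n)
    (hV : Fintype.card V = n)
    (hδlo : (n : ℝ) / 2 < δ) (hδhi : (δ : ℝ) ≤ (3 / 5) * n)
    (G : SimpleGraph V) (V₁ V₂ V₃ : Finset V)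
    (hd12 : Disjoint V₁ V₂) (hd13 : Disjoint V₁ V₃) (hd23 : Disjoint V₂ V₃)
    (hcover : ∀ v : V, v ∈ V₁ ∨ v ∈ V₂ ∨ v ∈ V₃)
    (hc1 : V₁.card = n - δ) (hc2 : V₂.card = n - δ) (hc3 : V₃.card = 2 * δ - n)
    (hjoin : ∀ u v : V, ((u ∈ V₁ ∧ v ∈ V₂) ∨ (u ∈ V₁ ∧ v ∈ V₃) ∨ (u ∈ V₂ ∧ v ∈ V₃)) →
      G.Adj u v)
    (htf : ∀ W ∈ ({V₁, V₂, V₃} : Set (Finset V)), ∀ a ∈ W, ∀ b ∈ W, ∀ c ∈ W,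
      ¬(G.Adj a b ∧ G.Adj a c ∧ G.Adj b c)) :
    ∀ Γ : Finset (Finset V), (∀ t ∈ Γ, MonoTriangle G V₁ t) →
      (∀ s ∈ Γ, ∀ t ∈ Γ, s ≠ t → Disjoint s t) →
      Γ.card ≤ 2 * δ - n := by
  intro Γ hmono hdisj
  have hne : Nonempty V := by
    rw [← Fintype.card_pos_iff, hV]; exact hn
  -- every mono triangle meets V₃
  have hmeet : ∀ t ∈ Γ, (t ∩ V₃).Nonempty := by
    intro t ht
    obtain ⟨a, b, c, rfl, hab, hac, hbc, gab, gac, gbc, hcol⟩ := hmono t ht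
    rcases hcol with ⟨r1, r2, r3⟩ | ⟨r1, r2, r3⟩
    · exfalso
      unfold RedPair at r1 r2 r3
      tauto
    · -- blue triangle: all same side of V₁
      have key : ∀ x y : V, ¬ RedPair V₁ x y → (x ∈ V₁ ↔ y ∈ V₁) := by
        intro x y h
        unfold RedPair at h
        tauto
      have h1 := key _ _ r1
      have h2 := key _ _ r2
      by_cases ha : a ∈ V₁
      · exfalso
        exact htf V₁ (by simp) a ha b (h1.mp ha) c (h2.mp ha) ⟨gab, gac, gbc⟩
      · have hb : b ∉ V₁ := fun h => ha (h1.mpr h)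
        have hc : c ∉ V₁ := fun h => ha (h2.mpr h)
        by_cases h3a : a ∈ V₃
        · exact ⟨a, by simp [h3a]⟩
        · by_cases h3b : b ∈ V₃
          · exact ⟨b, by simp [h3b]⟩
          · by_cases h3c : c ∈ V₃
            · exact ⟨c, by simp [h3c]⟩
            · exfalso
              have ha2 : a ∈ V₂ := by rcases hcover a with h | h | h <;> tauto
              have hb2 : b ∈ V₂ := by rcases hcover b with h | h | h <;> tauto
              have hc2 : c ∈ V₂ := by rcases hcover c with h | h | h <;> tauto
              exact htf V₂ (by simp) a ha2 b hb2 c hc2 ⟨gab, gac, gbc⟩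
  rw [← hc3]
  classical
  apply Finset.card_le_card_of_injOn
    (fun t => if h : (t ∩ V₃).Nonempty then h.choose else Classical.arbitrary V)
  · intro t ht
    simp only [hmeet t ht, dif_pos]
    have := (hmeet t ht).choose_spec
    exact (Finset.mem_inter.mp this).2
  · intro s hs t ht hst
    by_contra hne'
    have hmem_s := (hmeet s hs).choose_spec
    have hmem_t := (hmeet t ht).choose_spec
    simp only [hmeet s hs, hmeet t ht, dif_pos] at hst
    have hdis := hdisj s hs t ht hne'
    exact Finset.disjoint_left.mp hdis (Finset.mem_inter.mp hmem_s).1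
      (hst ▸ (Finset.mem_inter.mp hmem_t).1)
end

section
/- In the complete tripartite-plus-triangle-free construction: let G have parts V₁, V₂, V₃ with |V₁| = |V₂| = n - δ, |V₃| = 2δ - n (where n/2 < δ ≤ 3n/5), complete bipartite graphs between distinct parts, and G[V₁] triangle-free. If all edges between V₁ and its complement are red and all other edges blue, then any triangle containing a vertex of V₁ has either exactly two red edges and at most one blue edge, or exactly two red edges and one edge inside V₁, and in all cases is not monochromatic. -/
open Finset

/-- in the construction with parts `V₁, V₂, V₃` of sizes `n - δ, n - δ, 2δ - n`
(`n/2 < δ ≤ 3n/5`), complete bipartite between distinct parts and `G[V₁]` triangle-free,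
where edges between `V₁` and its complement are red and all other edges blue, every triangle
containing a vertex of `V₁` has exactly two red edges and one blue edge, and is not
monochromatic. -/
theorem stmt11 {V : Type*} [Fintype V] [DecidableEq V] (n δ : ℕ)
    (hV : Fintype.card V = n)
    (hδlo : (n : ℝ) / 2 < δ) (hδhi : (δ : ℝ) ≤ 3 * (n : ℝ) / 5)
    (G : SimpleGraph V) (V₁ V₂ V₃ : Finset V)
    (hd12 : Disjoint V₁ V₂) (hd13 : Disjoint V₁ V₃) (hd23 : Disjoint V₂ V₃)
    (hcover : ∀ v : V, v ∈ V₁ ∨ v ∈ V₂ ∨ v ∈ V₃)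
    (hc1 : V₁.card = n - δ) (hc2 : V₂.card = n - δ) (hc3 : V₃.card = 2 * δ - n)
    (hjoin : ∀ u v : V, ((u ∈ V₁ ∧ v ∈ V₂) ∨ (u ∈ V₁ ∧ v ∈ V₃) ∨ (u ∈ V₂ ∧ v ∈ V₃)) →
      G.Adj u v)
    (htf1 : ∀ a ∈ V₁, ∀ b ∈ V₁, ∀ c ∈ V₁, ¬(G.Adj a b ∧ G.Adj a c ∧ G.Adj b c)) :
    ∀ a b c : V, a ∈ V₁ → a ≠ b → a ≠ c → b ≠ c →
      G.Adj a b → G.Adj a c → G.Adj b c →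
      ((RedPair V₁ a b ∧ RedPair V₁ a c ∧ ¬RedPair V₁ b c) ∨
       (RedPair V₁ a b ∧ ¬RedPair V₁ a c ∧ RedPair V₁ b c) ∨
       (¬RedPair V₁ a b ∧ RedPair V₁ a c ∧ RedPair V₁ b c)) ∧
      ¬((RedPair V₁ a b ∧ RedPair V₁ a c ∧ RedPair V₁ b c) ∨
        (¬RedPair V₁ a b ∧ ¬RedPair V₁ a c ∧ ¬RedPair V₁ b c)) := by
  intro a b c ha _ _ _ hab hac hbc
  by_cases hb : b ∈ V₁ <;> by_cases hc : c ∈ V₁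
  · exact absurd ⟨hab, hac, hbc⟩ (htf1 a ha b hb c hc)
  all_goals simp [RedPair, ha, hb, hc] <;> tauto
end

section
/- Let G be a 2-edge-colored graph with red subgraph R and blue subgraph B, let Y be a vertex set and X₁^b, …, X_h^b subsets of a set X disjoint from Y. Suppose G has no monochromatic triangle with two vertices in X and one in Y, and each X_i^b = {x ∈ X : x u_i ∈ E(B)} for some u_i ∈ Y. Then for every y ∈ Y and every i, |N_R(y) ∩ X_i^b| < α(G) + 1, and hence |N_R(y) ∩ ⋃ᵢ X_i^b| ≤ h·α(G), and summing over y ∈ Y gives |E(⋃ᵢ X_i^b, Y) ∩ E(R)| ≤ |Y|·h·α(G). -/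
open Finset
open scoped Classical

/-! The set `N_R(y) ∩ X_i^b` is independent in `G`: a red edge inside it closes a red triangle
with `y`, a blue edge a blue triangle with `u_i`. Summing over `i` bounds `|N_R(y) ∩ ⋃ᵢ X_i^b|`,
and summing that over `y ∈ Y` counts the red edges between `⋃ᵢ X_i^b` and `Y`. -/

noncomputable def indepNum {V : Type*} [Fintype V] (G : SimpleGraph V) : ℕ :=
  sSup {n | ∃ s : Finset V, (∀ u ∈ s, ∀ v ∈ s, ¬ G.Adj u v) ∧ s.card = n}

lemma card_le_indepNum {V : Type*} [Fintype V] (G : SimpleGraph V)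
    (s : Finset V) (hs : ∀ u ∈ s, ∀ v ∈ s, ¬ G.Adj u v) : s.card ≤ indepNum G := by
  apply le_csSup
  · refine ⟨Fintype.card V, ?_⟩
    rintro n ⟨t, -, rfl⟩
    exact t.card_le_univ
  · exact ⟨s, hs, rfl⟩

lemma card_le_indepNum_of_red_apex_blue_apex {V : Type*} [Fintype V] {G R B : SimpleGraph V}
    (hcov : ∀ a b, G.Adj a b → R.Adj a b ∨ B.Adj a b) {s : Finset V} {y z : V}
    (hy : ∀ x ∈ s, R.Adj x y) (hz : ∀ x ∈ s, B.Adj x z)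
    (hRfree : ∀ a ∈ s, ∀ b ∈ s, a ≠ b → ¬(R.Adj a b ∧ R.Adj a y ∧ R.Adj b y))
    (hBfree : ∀ a ∈ s, ∀ b ∈ s, a ≠ b → ¬(B.Adj a b ∧ B.Adj a z ∧ B.Adj b z)) :
    s.card ≤ indepNum G := by
  refine card_le_indepNum G s fun a ha b hb hab => ?_
  rcases hcov a b hab with hred | hblue
  · exact hRfree a ha b hb hab.ne ⟨hred, hy a ha, hy b hb⟩
  · exact hBfree a ha b hb hab.ne ⟨hblue, hz a ha, hz b hb⟩

lemma Finset.card_inter_biUnion_le_card_mul {ι β : Type*} [DecidableEq β] (t : Finset β)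
    (s : Finset ι) (f : ι → Finset β) (m : ℕ) (h : ∀ i ∈ s, #(t ∩ f i) ≤ m) :
    #(t ∩ s.biUnion f) ≤ #s * m := by
  rw [inter_biUnion]
  exact card_biUnion_le_card_mul s _ m h

lemma Rel.card_interedges_le_card_mul {α β : Type*} {r : α → β → Prop} [DecidableRel r]
    {s : Finset α} {t : Finset β} {m : ℕ} (h : ∀ b ∈ t, #{a ∈ s | r a b} ≤ m) :
    #(Rel.interedges r s t) ≤ #t * m := by
  calc #(Rel.interedges r s t) = ∑ b ∈ t, #{a ∈ s | r a b} := by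
        simp only [Rel.interedges, card_filter, sum_product_right]
    _ ≤ ∑ _b ∈ t, m := sum_le_sum h
    _ = #t * m := by rw [sum_const, smul_eq_mul]

theorem stmt13_general {V : Type*} [Fintype V] [DecidableEq V]
    (G R B : SimpleGraph V) (h : ℕ)
    (hcov : ∀ u v, G.Adj u v → R.Adj u v ∨ B.Adj u v)
    (X Y : Finset V)
    (u : Fin h → V) (hu : ∀ i, u i ∈ Y)
    (Xb : Fin h → Finset V)
    (hXb : ∀ i, Xb i = X.filter fun x => B.Adj x (u i))
    (hnoMono : ∀ x₁ ∈ X, ∀ x₂ ∈ X, ∀ y ∈ Y, x₁ ≠ x₂ →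
      ¬((R.Adj x₁ x₂ ∧ R.Adj x₁ y ∧ R.Adj x₂ y) ∨
        (B.Adj x₁ x₂ ∧ B.Adj x₁ y ∧ B.Adj x₂ y))) :
    (∀ y ∈ Y, ∀ i, (R.neighborFinset y ∩ Xb i).card < indepNum G + 1) ∧
    (∀ y ∈ Y, (R.neighborFinset y ∩ Finset.univ.biUnion Xb).card ≤ h * indepNum G) ∧
    (Rel.interedges R.Adj (Finset.univ.biUnion Xb) Y).card ≤ Y.card * h * indepNum G := by
  have hpart : ∀ y ∈ Y, ∀ i, #(R.neighborFinset y ∩ Xb i) ≤ indepNum G := by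
    intro y hy i
    have hmem : ∀ x ∈ R.neighborFinset y ∩ Xb i, x ∈ X ∧ R.Adj x y ∧ B.Adj x (u i) := by
      intro x hx
      simp only [mem_inter, SimpleGraph.mem_neighborFinset, hXb, mem_filter] at hx
      exact ⟨hx.2.1, hx.1.symm, hx.2.2⟩
    refine card_le_indepNum_of_red_apex_blue_apex hcov (fun x hx => (hmem x hx).2.1)
      (fun x hx => (hmem x hx).2.2) (fun a ha b hb hab hred => ?_) (fun a ha b hb hab hblue => ?_)
    · exact hnoMono a (hmem a ha).1 b (hmem b hb).1 y hy hab (Or.inl hred)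
    · exact hnoMono a (hmem a ha).1 b (hmem b hb).1 (u i) (hu i) hab (Or.inr hblue)
  have hunion : ∀ y ∈ Y, #(R.neighborFinset y ∩ univ.biUnion Xb) ≤ h * indepNum G := by
    intro y hy
    simpa using card_inter_biUnion_le_card_mul _ univ Xb _ fun i _ => hpart y hy i
  refine ⟨fun y hy i => Nat.lt_succ_of_le (hpart y hy i), hunion, ?_⟩
  rw [mul_assoc]
  refine Rel.card_interedges_le_card_mul fun y hy => ?_
  convert hunion y hy using 2
  ext x
  simp [SimpleGraph.adj_comm, and_comm]

/-- in a 2-edge-coloured graph `(G; R, B)` with no monochromatic triangle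
having two vertices in `X` and one in `Y`, where `X_i^b = {x ∈ X : x uᵢ ∈ E(B)}` for
vertices `uᵢ ∈ Y`, every `y ∈ Y` satisfies `|N_R(y) ∩ X_i^b| < α(G) + 1` for each `i`,
hence `|N_R(y) ∩ ⋃ᵢ X_i^b| ≤ h·α(G)`, and the number of red edges between `⋃ᵢ X_i^b`
and `Y` is at most `|Y|·h·α(G)`. -/
theorem stmt13 {V : Type*} [Fintype V] [DecidableEq V]
    (G R B : SimpleGraph V) (h : ℕ)
    (hR : R ≤ G) (hB : B ≤ G)
    (hdisjc : ∀ u v, ¬(R.Adj u v ∧ B.Adj u v))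
    (hcov : ∀ u v, G.Adj u v → R.Adj u v ∨ B.Adj u v)
    (X Y : Finset V) (hXY : Disjoint X Y)
    (u : Fin h → V) (hu : ∀ i, u i ∈ Y)
    (Xb : Fin h → Finset V)
    (hXb : ∀ i, Xb i = X.filter fun x => B.Adj x (u i))
    (hnoMono : ∀ x₁ ∈ X, ∀ x₂ ∈ X, ∀ y ∈ Y, x₁ ≠ x₂ →
      ¬((R.Adj x₁ x₂ ∧ R.Adj x₁ y ∧ R.Adj x₂ y) ∨
        (B.Adj x₁ x₂ ∧ B.Adj x₁ y ∧ B.Adj x₂ y))) :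
    (∀ y ∈ Y, ∀ i, (R.neighborFinset y ∩ Xb i).card < indepNum G + 1) ∧
    (∀ y ∈ Y, (R.neighborFinset y ∩ Finset.univ.biUnion Xb).card ≤ h * indepNum G) ∧
    (Rel.interedges R.Adj (Finset.univ.biUnion Xb) Y).card ≤ Y.card * h * indepNum G :=
  stmt13_general G R B h hcov X Y u hu Xb hXb hnoMono
end
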